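/- Let P, Q be probability distributions on ℝ with everywhere positive continuous densities f_X, f_Y and CDFs F_X, F_Y, both symmetric around a common center x*: f_X(x* + t) = f_X(x* − t) and f_Y(x* + t) = f_Y(x* − t) for all t ∈ ℝ. Then TVD(P_Q^{HD}, U) = TVD(Q_P^{HD}, U) = TVD(P, Q), where P_Q^{HD} is the law of min{F_X(Y), 1 − F_X(Y)} for Y ∼ Q, Q_P^{HD} is the law of min{F_Y(X), 1 − F_Y(X)} for X ∼ P, and U is the uniform distribution on [0, 1/2]. -/

import Mathlib

open MeasureTheory Set
open scoped ENNReal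

/-- The total variation distance between two measures on `ℝ`, computed via their
densities (Radon–Nikodym derivatives) with respect to Lebesgue measure:
`TVD(P,Q) = (1/2) ∫ |p(x) - q(x)| dx`. -/
noncomputable def TVD (μ ν : Measure ℝ) : ℝ :=
  (1 / 2) * ∫ x, |(μ.rnDeriv volume x).toReal - (ν.rnDeriv volume x).toReal|

/-!
Let `F` be the CDF of `P` and `c` the common centre. Since `F` is continuous and strictly
increasing with `F (2c - y) = 1 - F y`, the depth `min (F y) (1 - F y)` equals `F y` for `y < c`
and is invariant under `y ↦ 2c - y`, as is the density `q` of `Q`. Folding `Q` onto the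
half-line `y < c` and substituting `u = F y` shows that the depth of `Y ∼ Q` has density
`2 q (F⁻¹ u) / f (F⁻¹ u)` on `[0, 1/2]`. Substituting back, its `L¹` distance to the uniform
density `2` is `2 ∫_{y < c} |q - f|`, which is `∫ |q - f|` by the symmetry of `|q - f|`.
The second identity is the first one with `P` and `Q` exchanged.
-/

open ProbabilityTheory Filter Topology

lemma TVD_comm (μ ν : Measure ℝ) : TVD μ ν = TVD ν μ := by
  simp only [TVD, abs_sub_comm]

lemma TVD_withDensity {a b : ℝ → ℝ≥0∞} (ha : Measurable a) (hb : Measurable b) :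
    TVD (volume.withDensity a) (volume.withDensity b) =
      1 / 2 * (∫⁻ x, ENNReal.ofReal |(a x).toReal - (b x).toReal|).toReal := by
  have hae : (fun x ↦ |((volume.withDensity a).rnDeriv volume x).toReal -
      ((volume.withDensity b).rnDeriv volume x).toReal|) =ᵐ[volume]
      fun x ↦ |(a x).toReal - (b x).toReal| := by
    filter_upwards [Measure.rnDeriv_withDensity volume ha, Measure.rnDeriv_withDensity volume hb]
      with x hax hbx
    rw [hax, hbx]
  rw [TVD, integral_congr_ae hae, integral_eq_lintegral_of_nonneg_ae
    (f := fun x ↦ |(a x).toReal - (b x).toReal|) (Eventually.of_forall fun _ ↦ abs_nonneg _)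
    (ha.ennreal_toReal.sub hb.ennreal_toReal).abs.aestronglyMeasurable]

theorem StrictMono.image_Iio_of_tendsto_atBot {α β : Type*} [ConditionallyCompleteLinearOrder α]
    [TopologicalSpace α] [OrderTopology α] [DenselyOrdered α] [NoMinOrder α] [LinearOrder β]
    [TopologicalSpace β] [OrderClosedTopology β] {F : α → β} (hF : StrictMono F)
    (hFc : Continuous F) {a : β} (hbot : Tendsto F atBot (𝓝 a)) (c : α) :
    F '' Iio c = Ioo a (F c) := by
  refine subset_antisymm ?_ ?_
  · rintro _ ⟨y, hy, rfl⟩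
    obtain ⟨z, hz⟩ := exists_lt y
    exact ⟨(hF.monotone.le_of_tendsto hbot z).trans_lt (hF hz), hF hy⟩
  · have : Nonempty α := ⟨c⟩
    exact isPreconnected_Iio.intermediate_value_Ioo (l₂ := 𝓝[<] c)
      (le_principal_iff.2 (Iio_mem_atBot c)) (le_principal_iff.2 self_mem_nhdsWithin)
      hFc.continuousOn hbot (hFc.continuousAt.tendsto.mono_left nhdsWithin_le_nhds)

section Reflection

variable {c : ℝ}

lemma apply_two_mul_sub_of_symm {β : Type*} {Φ : ℝ → β}
    (hΦ : ∀ t, Φ (c + t) = Φ (c - t)) (x : ℝ) : Φ (2 * c - x) = Φ x := by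
  have h := hΦ (c - x)
  rwa [sub_sub_cancel, ← add_sub_assoc, ← two_mul] at h

lemma setLIntegral_preimage_reflect {Φ : ℝ → ℝ≥0∞} (hΦ : ∀ t, Φ (c + t) = Φ (c - t))
    (s : Set ℝ) : ∫⁻ x in (fun x ↦ 2 * c - x) ⁻¹' s, Φ x = ∫⁻ x in s, Φ x := by
  simpa only [apply_two_mul_sub_of_symm hΦ] using
    (Measure.measurePreserving_sub_left volume (2 * c)).setLIntegral_comp_preimage_emb
      (measurableEmbedding_subLeft (2 * c)) Φ s

lemma lintegral_eq_two_mul_setLIntegral_Iio {Φ : ℝ → ℝ≥0∞}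
    (hΦ : ∀ t, Φ (c + t) = Φ (c - t)) :
    ∫⁻ x, Φ x = 2 * ∫⁻ x in Iio c, Φ x := by
  have hIoi : (fun x ↦ 2 * c - x) ⁻¹' Iio c = Ioi c := by
    ext x; simp only [mem_preimage, mem_Iio, mem_Ioi]; constructor <;> intro h <;> linarith
  rw [← lintegral_add_compl Φ measurableSet_Iio, compl_Iio, ← setLIntegral_congr Ioi_ae_eq_Ici,
    ← hIoi, setLIntegral_preimage_reflect hΦ, two_mul]

end Reflection

lemma integrable_of_isFiniteMeasure_withDensity {α : Type*} [MeasurableSpace α]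
    {m μ : Measure α} [IsFiniteMeasure μ] {f : α → ℝ} (hfm : Measurable f)
    (hf0 : ∀ x, 0 ≤ f x) (hμ : μ = m.withDensity fun x ↦ ENNReal.ofReal (f x)) :
    Integrable f m := by
  refine (lintegral_ofReal_ne_top_iff_integrable hfm.aestronglyMeasurable
    (Eventually.of_forall hf0)).1 ?_
  rw [← setLIntegral_univ, ← withDensity_apply _ MeasurableSet.univ, ← hμ]
  exact measure_ne_top μ univ

section Cdf

variable {μ : Measure ℝ} [IsProbabilityMeasure μ] {f : ℝ → ℝ}
  (hμ : μ = volume.withDensity fun x ↦ ENNReal.ofReal (f x))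
include hμ

lemma cdf_eq_setIntegral (hfm : Measurable f) (hf0 : ∀ x, 0 ≤ f x) (x : ℝ) :
    cdf μ x = ∫ t in Iic x, f t := by
  rw [cdf_eq_real, measureReal_def, hμ, withDensity_apply _ measurableSet_Iic,
    integral_eq_lintegral_of_nonneg_ae (Eventually.of_forall hf0) hfm.aestronglyMeasurable]

lemma hasDerivAt_cdf (hf : Continuous f) (hf0 : ∀ x, 0 ≤ f x) (x : ℝ) :
    HasDerivAt (cdf μ) (f x) x := by
  have hint := integrable_of_isFiniteMeasure_withDensity hf.measurable hf0 hμ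
  have hprim : cdf μ = fun y ↦ cdf μ 0 + ∫ t in (0 : ℝ)..y, f t := by
    ext y
    rw [cdf_eq_setIntegral hμ hf.measurable hf0, cdf_eq_setIntegral hμ hf.measurable hf0,
      ← intervalIntegral.integral_Iic_sub_Iic hint.integrableOn hint.integrableOn]
    ring
  rw [hprim]
  exact (hf.integral_hasStrictDerivAt 0 x).hasDerivAt.const_add _

lemma continuous_cdf (hf : Continuous f) (hf0 : ∀ x, 0 ≤ f x) : Continuous (cdf μ) :=
  continuous_iff_continuousAt.2 fun x ↦ (hasDerivAt_cdf hμ hf hf0 x).continuousAt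

lemma strictMono_cdf (hf : Continuous f) (hfpos : ∀ x, 0 < f x) : StrictMono (cdf μ) :=
  strictMono_of_hasDerivAt_pos (hasDerivAt_cdf hμ hf fun x ↦ (hfpos x).le) hfpos

variable {c : ℝ}

lemma cdf_two_mul_sub (hsym : ∀ t, f (c + t) = f (c - t)) (x : ℝ) :
    cdf μ (2 * c - x) = 1 - cdf μ x := by
  have hIic : Iic (2 * c - x) = (fun y ↦ 2 * c - y) ⁻¹' Ici x := by
    ext y; simp only [mem_preimage, mem_Iic, mem_Ici]; constructor <;> intro h <;> linarith
  have hmeas : μ (Iic (2 * c - x)) = μ (Ici x) := by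
    rw [hμ, withDensity_apply _ measurableSet_Iic, withDensity_apply _ measurableSet_Ici, hIic,
      setLIntegral_preimage_reflect fun t ↦ by rw [hsym]]
  have : NullSingletonClass μ := hμ ▸ inferInstance
  rw [cdf_eq_real, cdf_eq_real, measureReal_def, hmeas, ← measureReal_def, ← compl_Iio,
    probReal_compl_eq_one_sub measurableSet_Iio, measureReal_congr Iio_ae_eq_Iic]

lemma cdf_center (hsym : ∀ t, f (c + t) = f (c - t)) : cdf μ c = 1 / 2 := by
  have h := cdf_two_mul_sub hμ hsym c
  rw [two_mul, add_sub_cancel_right] at h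
  linarith

lemma cdf_image_Iio_center (hf : Continuous f) (hfpos : ∀ x, 0 < f x)
    (hsym : ∀ t, f (c + t) = f (c - t)) : cdf μ '' Iio c = Ioo 0 (1 / 2) := by
  rw [(strictMono_cdf hμ hf hfpos).image_Iio_of_tendsto_atBot
    (continuous_cdf hμ hf fun x ↦ (hfpos x).le) (tendsto_cdf_atBot μ), cdf_center hμ hsym]

lemma setLIntegral_Icc_zero_half_eq_setLIntegral_Iio_cdf (hf : Continuous f)
    (hfpos : ∀ x, 0 < f x) (hsym : ∀ t, f (c + t) = f (c - t)) (Φ : ℝ → ℝ≥0∞) :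
    ∫⁻ u in Icc 0 (1 / 2), Φ u = ∫⁻ y in Iio c, ENNReal.ofReal (f y) * Φ (cdf μ y) := by
  rw [setLIntegral_congr Ioo_ae_eq_Icc.symm, ← cdf_image_Iio_center hμ hf hfpos hsym,
    lintegral_image_eq_lintegral_deriv_mul_of_monotoneOn measurableSet_Iio
      (fun y _ ↦ (hasDerivAt_cdf hμ hf (fun x ↦ (hfpos x).le) y).hasDerivWithinAt)
      ((cdf μ).mono.monotoneOn _)]

end Cdf

/-- For injective `F`, `Function.extend F id 0` is a left inverse of `F`; when `F` is the CDF of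
the density `f`, this is the density of the law of `min (F Y) (1 - F Y)` for `Y` with density
`q`. -/
noncomputable def halfspaceDepthDensity (F f q : ℝ → ℝ) : ℝ → ℝ≥0∞ :=
  (Icc 0 (1 / 2)).indicator fun u ↦ ENNReal.ofReal (2 * (q / f) (Function.extend F id 0 u))

lemma measurable_halfspaceDepthDensity {F f q : ℝ → ℝ} (hF : MeasurableEmbedding F)
    (hf : Measurable f) (hq : Measurable q) : Measurable (halfspaceDepthDensity F f q) :=
  ((measurable_const.mul ((hq.div hf).comp (hF.measurable_extend measurable_id
    measurable_const))).ennreal_ofReal).indicator measurableSet_Icc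

lemma mul_abs_two_mul_div_sub_two {a b : ℝ} (ha : 0 < a) :
    a * |2 * (b / a) - 2| = 2 * |a - b| := by
  have h : a * (2 * (b / a) - 2) = 2 * (b - a) := by field_simp [ha.ne']
  rw [← abs_of_pos ha, ← abs_mul, abs_of_pos ha, h, abs_mul, abs_two, abs_sub_comm]

section HalfspaceDepth

variable {μ ν : Measure ℝ} [IsProbabilityMeasure μ] {f q : ℝ → ℝ} {c : ℝ}
  (hμ : μ = volume.withDensity fun x ↦ ENNReal.ofReal (f x))
  (hf : Continuous f) (hfpos : ∀ x, 0 < f x) (hsymf : ∀ t, f (c + t) = f (c - t))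
  (hsymq : ∀ t, q (c + t) = q (c - t))
include hμ hf hfpos hsymf hsymq

lemma map_halfspaceDepth_eq_withDensity
    (hν : ν = volume.withDensity fun x ↦ ENNReal.ofReal (q x)) :
    ν.map (fun y ↦ min (cdf μ y) (1 - cdf μ y)) =
      volume.withDensity (halfspaceDepthDensity (cdf μ) f q) := by
  set g := fun y ↦ min (cdf μ y) (1 - cdf μ y)
  have hFc := continuous_cdf hμ hf fun x ↦ (hfpos x).le
  have hg : Measurable g := (hFc.min (continuous_const.sub hFc)).measurable
  have hg_symm (t : ℝ) : g (c + t) = g (c - t) := by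
    have h := cdf_two_mul_sub hμ hsymf (c + t)
    rw [show 2 * c - (c + t) = c - t by ring] at h
    simp only [g, h, sub_sub_cancel, min_comm]
  ext A hA
  rw [Measure.map_apply hg hA, hν, withDensity_apply _ (hg hA), ← lintegral_indicator (hg hA),
    lintegral_eq_two_mul_setLIntegral_Iio (c := c) fun t ↦ by
      classical simp only [indicator_apply, mem_preimage, hg_symm, hsymq],
    withDensity_apply _ hA, halfspaceDepthDensity, lintegral_indicator measurableSet_Icc,
    Measure.restrict_restrict measurableSet_Icc, inter_comm, ← Measure.restrict_restrict hA,
    ← lintegral_indicator hA,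
    setLIntegral_Icc_zero_half_eq_setLIntegral_Iio_cdf hμ hf hfpos hsymf,
    ← lintegral_const_mul' _ _ ENNReal.ofNat_ne_top]
  refine setLIntegral_congr_fun measurableSet_Iio fun y hy ↦ ?_
  have hFy : cdf μ y < 1 / 2 := cdf_center hμ hsymf ▸ strictMono_cdf hμ hf hfpos hy
  have hgy : g y = cdf μ y := min_eq_left (by linarith)
  by_cases hyA : cdf μ y ∈ A
  · have hdensity : f y * (2 * (q y / f y)) = 2 * q y := by field_simp [(hfpos y).ne']
    rw [indicator_of_mem (by simpa [hgy]), indicator_of_mem hyA,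
      (strictMono_cdf hμ hf hfpos).injective.extend_apply, id, Pi.div_apply,
      ← ENNReal.ofReal_mul (hfpos y).le, hdensity, ENNReal.ofReal_mul zero_le_two,
      ENNReal.ofReal_ofNat]
  · rw [indicator_of_notMem (by simpa [hgy]), indicator_of_notMem hyA, mul_zero, mul_zero]

lemma lintegral_halfspaceDepthDensity_sub_uniform (hq0 : ∀ x, 0 ≤ q x) :
    ∫⁻ u, ENNReal.ofReal |(halfspaceDepthDensity (cdf μ) f q u).toReal -
        ((Icc 0 (1 / 2)).indicator (fun _ ↦ (2 : ℝ≥0∞)) u).toReal| =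
      ∫⁻ x, ENNReal.ofReal |f x - q x| := by
  set ψ := Function.extend (cdf μ) id 0
  have hψ (y : ℝ) : ψ (cdf μ y) = y :=
    (strictMono_cdf hμ hf hfpos).injective.extend_apply _ _ y
  have hpt : (fun u ↦ ENNReal.ofReal |(halfspaceDepthDensity (cdf μ) f q u).toReal -
        ((Icc 0 (1 / 2)).indicator (fun _ ↦ (2 : ℝ≥0∞)) u).toReal|) =
      (Icc 0 (1 / 2)).indicator fun u ↦ ENNReal.ofReal |2 * (q / f) (ψ u) - 2| := by
    ext u
    by_cases hu : u ∈ Icc (0 : ℝ) (1 / 2)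
    · have hnonneg : 0 ≤ 2 * (q / f) (ψ u) :=
        mul_nonneg zero_le_two (div_nonneg (hq0 _) (hfpos _).le)
      rw [halfspaceDepthDensity, indicator_of_mem hu, indicator_of_mem hu, indicator_of_mem hu,
        ENNReal.toReal_ofReal hnonneg, ENNReal.toReal_ofNat]
    · rw [halfspaceDepthDensity, indicator_of_notMem hu, indicator_of_notMem hu,
        indicator_of_notMem hu, ENNReal.toReal_zero, sub_zero, abs_zero, ENNReal.ofReal_zero]
  rw [hpt, lintegral_indicator measurableSet_Icc,
    setLIntegral_Icc_zero_half_eq_setLIntegral_Iio_cdf hμ hf hfpos hsymf,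
    lintegral_eq_two_mul_setLIntegral_Iio (c := c) fun t ↦ by rw [hsymf, hsymq],
    ← lintegral_const_mul' _ _ ENNReal.ofNat_ne_top]
  refine setLIntegral_congr_fun measurableSet_Iio fun y _ ↦ ?_
  rw [hψ, Pi.div_apply, ← ENNReal.ofReal_mul (hfpos y).le, mul_abs_two_mul_div_sub_two (hfpos y),
    ENNReal.ofReal_mul zero_le_two, ENNReal.ofReal_ofNat]

lemma TVD_map_halfspaceDepth_uniform_eq_TVD (hq : Measurable q) (hq0 : ∀ x, 0 ≤ q x)
    (hν : ν = volume.withDensity fun x ↦ ENNReal.ofReal (q x)) :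
    TVD (ν.map fun y ↦ min (cdf μ y) (1 - cdf μ y))
        ((2 : ℝ≥0∞) • volume.restrict (Icc (0 : ℝ) (1 / 2))) = TVD μ ν := by
  have hF : MeasurableEmbedding (cdf μ) :=
    (continuous_cdf hμ hf fun x ↦ (hfpos x).le).measurableEmbedding
      (strictMono_cdf hμ hf hfpos).injective
  rw [map_halfspaceDepth_eq_withDensity hμ hf hfpos hsymf hsymq hν, ← withDensity_const,
    ← withDensity_indicator measurableSet_Icc,
    TVD_withDensity (measurable_halfspaceDepthDensity hF hf.measurable hq)
      (measurable_const.indicator measurableSet_Icc),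
    lintegral_halfspaceDepthDensity_sub_uniform hμ hf hfpos hsymf hsymq hq0, hμ, hν,
    TVD_withDensity hf.measurable.ennreal_ofReal hq.ennreal_ofReal]
  simp only [ENNReal.toReal_ofReal (hfpos _).le, ENNReal.toReal_ofReal (hq0 _)]

end HalfspaceDepth

theorem hd_induced_tvd_eq_of_symmetric_concentric
    (P Q : Measure ℝ) [IsProbabilityMeasure P] [IsProbabilityMeasure Q]
    (fX fY : ℝ → ℝ) (hfXpos : ∀ x, 0 < fX x) (hfYpos : ∀ x, 0 < fY x)
    (hfXc : Continuous fX) (hfYc : Continuous fY)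
    (hP : P = volume.withDensity (fun x => ENNReal.ofReal (fX x)))
    (hQ : Q = volume.withDensity (fun x => ENNReal.ofReal (fY x)))
    (FX FY : ℝ → ℝ)
    (hFX : ∀ x, FX x = (P (Iic x)).toReal)
    (hFY : ∀ x, FY x = (Q (Iic x)).toReal)
    (xstar : ℝ)
    (hsymX : ∀ t : ℝ, fX (xstar + t) = fX (xstar - t))
    (hsymY : ∀ t : ℝ, fY (xstar + t) = fY (xstar - t)) :
    TVD (Measure.map (fun y => min (FX y) (1 - FX y)) Q)
        ((2 : ℝ≥0∞) • volume.restrict (Icc (0 : ℝ) (1 / 2))) = TVD P Q ∧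
    TVD (Measure.map (fun x => min (FY x) (1 - FY x)) P)
        ((2 : ℝ≥0∞) • volume.restrict (Icc (0 : ℝ) (1 / 2))) = TVD P Q := by
  obtain rfl : FX = cdf P := funext fun x ↦ by rw [hFX, cdf_eq_real, measureReal_def]
  obtain rfl : FY = cdf Q := funext fun x ↦ by rw [hFY, cdf_eq_real, measureReal_def]
  exact ⟨TVD_map_halfspaceDepth_uniform_eq_TVD hP hfXc hfXpos hsymX hsymY hfYc.measurable
      (fun x ↦ (hfYpos x).le) hQ,
    (TVD_map_halfspaceDepth_uniform_eq_TVD hQ hfYc hfYpos hsymY hsymX hfXc.measurable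
      (fun x ↦ (hfXpos x).le) hP).trans (TVD_comm Q P)⟩
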